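/- arXiv:1910.02995 — 2 statements merged into one kernel-verified Lean document; each statement's English description precedes it below -/
import Mathlib

section
/- The number of k-ary trees with n nodes equals the n-th k-Catalan number C_n^{(k)} = (1/((k-1)n+1)) * binom(nk, n). -/
/-- A `k`-ary tree: either the null tree, or a root with `k` ordered (possibly null)
child subtrees. -/
inductive KAryTree (k : ℕ) where
  | nil : KAryTree k
  | node (children : Fin k → KAryTree k) : KAryTree k

namespace KAryTree

/-- Number of nodes of a `k`-ary tree. -/
def numNodes {k : ℕ} : KAryTree k → ℕ
  | nil => 0
  | node c => 1 + ∑ i : Fin k, (c i).numNodes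

end KAryTree

def fuss (k : ℕ) : ℕ → ℕ → ℕ
  | 0, _ => 1
  | _+1, 0 => 0
  | n+1, j+1 => fuss k (n+1) j + fuss k n (k+j)
  termination_by n j => (n, j)

lemma fuss_zero (k j : ℕ) : fuss k 0 j = 1 := by simp [fuss]

lemma fuss_succ (k n j : ℕ) : fuss k (n+1) (j+1) = fuss k (n+1) j + fuss k n (k+j) := by
  rw [fuss]

lemma fuss_succ_zero (k n : ℕ) : fuss k (n+1) 0 = 0 := by rw [fuss]

lemma fuss_formula (l : ℕ) : ∀ n j : ℕ,
    ((l+1)*n + j + 1) * fuss (l+2) n (j+1) = (j+1) * Nat.choose ((l+2)*n + j) n := by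
  intro n
  induction n using Nat.strong_induction_on with
  | _ n ih =>
    rcases n with _ | n
    · intro j; simp [fuss_zero]
    intro j
    induction j with
    | zero =>
      rw [fuss_succ, fuss_succ_zero, Nat.zero_add]
      rw [show l+2+0 = l+1+1 from by norm_num]
      rw [show (l+2)*(n+1) + 0 = (l+2)*n+l+1+1 from by ring]
      have h1 := ih n (Nat.lt_succ_self n) (l+1)
      rw [show (l+2)*n + (l+1) = (l+2)*n+l+1 from by ring] at h1
      have h2 := Nat.add_one_mul_choose_eq ((l+2)*n+l+1) n
      apply Nat.eq_of_mul_eq_mul_right (Nat.succ_pos n)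
      zify at h1 h2 ⊢
      linear_combination ((n:ℤ)+1)*h1 + h2
    | succ j ihj =>
      rw [fuss_succ]
      have E1 := ihj
      have E2 := ih n (Nat.lt_succ_self n) (l+j+2)
      rw [show l+j+2+1 = l+2+(j+1) from by omega] at E2
      rw [show (l+2)*n + (l+j+2) = (l+2)*(n+1)+j from by ring] at E2
      have K := Nat.choose_succ_right_eq ((l+2)*(n+1)+j) n
      rw [show (l+2)*(n+1)+j - n = (l+1)*(n+1)+j+1 from by
        rw [show (l+2)*(n+1)+j = n + ((l+1)*(n+1)+j+1) from by ring, Nat.add_sub_cancel_left]] at K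
      have P := Nat.choose_succ_succ ((l+2)*(n+1)+j) n
      rw [show (l+2)*(n+1)+(j+1) = (l+2)*(n+1)+j+1 from by ring]
      apply Nat.eq_of_mul_eq_mul_left (show 0 < (l+1)*(n+1)+j+1 by positivity)
      zify at E1 E2 K P ⊢
      linear_combination ((l+1)*(n+1)+(j+1)+1 : ℤ)*E1 + ((l+1)*(n+1)+j+1 : ℤ)*E2
        - (l+1)*K - ((l+1)*(n+1)+j+1 : ℤ)*(j+2)*P

open KAryTree in
/-- Splitting a forest of `j+1` trees according to whether the first tree is nil or a node. -/
def rawSplit (k j : ℕ) : (Fin (j+1) → KAryTree k) ≃ (Fin j → KAryTree k) ⊕ (Fin (k+j) → KAryTree k) where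
  toFun f := match f 0 with
    | .nil => .inl (Fin.tail f)
    | .node c => .inr (Fin.append c (Fin.tail f))
  invFun x := match x with
    | .inl g => Fin.cons .nil g
    | .inr h => Fin.cons (.node (h ∘ Fin.castAdd j)) (h ∘ Fin.natAdd k)
  left_inv f := by
    rcases h : f 0 with _ | c <;> simp only [h]
    · rw [← h, Fin.cons_self_tail]
    · have h1 : (Fin.append c (Fin.tail f)) ∘ Fin.castAdd j = c := by
        funext i; simp [Fin.append_left]
      have h2 : (Fin.append c (Fin.tail f)) ∘ Fin.natAdd k = Fin.tail f := by
        funext i; simp [Fin.append_right]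
      rw [h1, h2, ← h, Fin.cons_self_tail]
  right_inv x := by
    rcases x with g | h
    · simp [Fin.tail_cons]
    · simp only [Fin.cons_zero, Fin.tail_cons]
      exact congrArg Sum.inr Fin.append_castAdd_natAdd

open KAryTree in
lemma sum_rawSplit (k j n : ℕ) (f : Fin (j+1) → KAryTree k) :
    (∑ i, (f i).numNodes) = n ↔
      Sum.elim (fun g : Fin j → KAryTree k => (∑ i, (g i).numNodes) = n)
        (fun h : Fin (k+j) → KAryTree k => 1 + (∑ i, (h i).numNodes) = n)
        (rawSplit k j f) := by
  rw [Fin.sum_univ_succ]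
  rcases h : f 0 with _ | c <;>
    simp only [rawSplit, h, Equiv.coe_fn_mk, Sum.elim_inl, Sum.elim_inr, numNodes]
  · simp [Fin.tail]
  · rw [Fin.sum_univ_add]
    constructor <;> intro hh <;> rw [← hh] <;>
      simp [Fin.tail, Fin.append_left, Fin.append_right] <;> ring

/-- The subtype version of `rawSplit`, tracking the number of nodes. -/
def forestSplit (k j n : ℕ) :
    {f : Fin (j+1) → KAryTree k // (∑ i, (f i).numNodes) = n} ≃
      {g : Fin j → KAryTree k // (∑ i, (g i).numNodes) = n} ⊕
      {h : Fin (k+j) → KAryTree k // 1 + (∑ i, (h i).numNodes) = n} :=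
  ((rawSplit k j).subtypeEquiv (sum_rawSplit k j n)).trans Equiv.subtypeSum

lemma forest_card (k : ℕ) : ∀ n j : ℕ,
    Nat.card {f : Fin j → KAryTree k // (∑ i, (f i).numNodes) = n} = fuss k n j ∧
    Finite {f : Fin j → KAryTree k // (∑ i, (f i).numNodes) = n} := by
  intro n
  induction n using Nat.strong_induction_on with
  | _ n ih =>
    intro j
    induction j with
    | zero =>
      rcases n with _ | n
      · haveI : Unique {f : Fin 0 → KAryTree k // (∑ i, (f i).numNodes) = 0} :=
          ⟨⟨⟨fun i => i.elim0, by simp⟩⟩, fun x => Subtype.ext (funext fun i => i.elim0)⟩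
        refine ⟨?_, inferInstance⟩
        rw [Nat.card_unique, fuss_zero]
      · haveI : IsEmpty {f : Fin 0 → KAryTree k // (∑ i, (f i).numNodes) = n+1} :=
          ⟨fun x => by have := x.2; simp at this⟩
        refine ⟨?_, inferInstance⟩
        rw [Nat.card_of_isEmpty, fuss_succ_zero]
    | succ j ihj =>
      obtain ⟨hc1, hf1⟩ := ihj
      haveI := hf1
      rcases n with _ | n
      · haveI : IsEmpty {h : Fin (k+j) → KAryTree k // 1 + (∑ i, (h i).numNodes) = 0} :=
          ⟨fun x => by simpa using x.2⟩
        haveI : Finite {f : Fin (j+1) → KAryTree k // (∑ i, (f i).numNodes) = 0} :=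
          Finite.of_equiv _ (forestSplit k j 0).symm
        refine ⟨?_, inferInstance⟩
        rw [Nat.card_congr (forestSplit k j 0), Nat.card_sum, hc1, Nat.card_of_isEmpty,
          fuss_zero, fuss_zero]
      · have e2 : {h : Fin (k+j) → KAryTree k // 1 + (∑ i, (h i).numNodes) = n+1} ≃
            {h : Fin (k+j) → KAryTree k // (∑ i, (h i).numNodes) = n} :=
          Equiv.subtypeEquivRight (fun h => by rw [Nat.add_comm]; exact Nat.add_right_cancel_iff)
        obtain ⟨hc2, hf2⟩ := ih n (Nat.lt_succ_self n) (k+j)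
        haveI := hf2
        haveI : Finite {h : Fin (k+j) → KAryTree k // 1 + (∑ i, (h i).numNodes) = n+1} :=
          Finite.of_equiv _ e2.symm
        haveI : Finite {f : Fin (j+1) → KAryTree k // (∑ i, (f i).numNodes) = n+1} :=
          Finite.of_equiv _ (forestSplit k j (n+1)).symm
        refine ⟨?_, inferInstance⟩
        rw [Nat.card_congr (forestSplit k j (n+1)), Nat.card_sum, hc1, Nat.card_congr e2, hc2,
          fuss_succ]


/-- The number of `k`-ary trees with `n` nodes is the `n`-th `k`-Catalan number
`C_n^{(k)} = (1/((k-1)n+1)) * binom(n*k, n)`; equivalently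
`((k-1)n+1) * #{k-ary trees with n nodes} = binom(n*k, n)`. -/
theorem card_kAryTree_numNodes (k n : ℕ) (hk : 2 ≤ k) :
    ((k - 1) * n + 1) * Nat.card {t : KAryTree k // t.numNodes = n} =
      (n * k).choose n := by
  obtain ⟨l, rfl⟩ : ∃ l, k = l + 2 := ⟨k - 2, by omega⟩
  have e : {t : KAryTree (l+2) // t.numNodes = n} ≃
      {f : Fin 1 → KAryTree (l+2) // (∑ i, (f i).numNodes) = n} :=
    Equiv.subtypeEquiv (Equiv.funUnique (Fin 1) (KAryTree (l+2))).symm (fun t => by simp)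
  rw [Nat.card_congr e, (forest_card (l+2) n 1).1]
  have h := fuss_formula l n 0
  norm_num at h ⊢
  rw [show (n*(l+2)) = (l+2)*n from by ring]
  convert h using 2
end

section
/- Let ε | T₁ ~ N(0, σ₁²) where σ₁² = λ(b−a)³/(48 m²), and let the event T₁ occur with probability P(T₁) = P_{Z~N(0,1)}(|Z| < 4mτ/√(λ(b−a)³)). Then P(|ε| > τ) ≥ P(|ε| > τ | T₁) P(T₁) = [1 − erf(2√6 m τ / √(λ(b−a)³))] · erf(2√2 m τ / √(λ(b−a)³)) > 0 for all τ > 0, λ > 0, m ≥ 1, a < b. -/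
/-!
Conditionally on `T₁` the error is a centred Gaussian, so `P(|ε| > τ | T₁)` is a two-sided
Gaussian tail, which rescales to `1 - erf(τ/√(2σ₁²))`; it is positive because the Gaussian law
charges every set of positive Lebesgue measure. The bound is then
`P(T₁) · P(|ε| > τ | T₁) = P(T₁ ∩ {|ε| > τ}) ≤ P(|ε| > τ)`.
-/

open MeasureTheory ProbabilityTheory

noncomputable def erf (x : ℝ) : ℝ := 2 / Real.sqrt Real.pi * ∫ t in (0:ℝ)..x, Real.exp (-t ^ 2)

open Set

lemma erf_nonneg {x : ℝ} (hx : 0 ≤ x) : 0 ≤ erf x :=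
  mul_nonneg (by positivity)
    (intervalIntegral.integral_nonneg hx fun t _ => (Real.exp_pos _).le)

lemma erf_pos {x : ℝ} (hx : 0 < x) : 0 < erf x :=
  mul_pos (by positivity) <| intervalIntegral.intervalIntegral_pos_of_pos_on
    (Continuous.intervalIntegrable (by fun_prop) 0 x) (fun t _ => Real.exp_pos _) hx

lemma integral_neg_self_exp_neg_sq (u : ℝ) :
    ∫ t in -u..u, Real.exp (-t ^ 2) = 2 * ∫ t in (0 : ℝ)..u, Real.exp (-t ^ 2) := by
  have hint (a b : ℝ) : IntervalIntegrable (fun t : ℝ => Real.exp (-t ^ 2)) volume a b :=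
    Continuous.intervalIntegrable (by fun_prop) a b
  have hneg : ∫ t in -u..0, Real.exp (-t ^ 2) = ∫ t in (0 : ℝ)..u, Real.exp (-t ^ 2) := by
    have h := intervalIntegral.integral_comp_neg (a := 0) (b := u) fun t => Real.exp (-t ^ 2)
    simp only [neg_zero, neg_sq] at h
    exact h.symm
  rw [← intervalIntegral.integral_add_adjacent_intervals (hint (-u) 0) (hint 0 u), hneg]
  ring

lemma gaussianReal_Icc_neg_self {v : NNReal} (hv : v ≠ 0) {τ : ℝ} (hτ : 0 ≤ τ) :
    gaussianReal 0 v (Icc (-τ) τ) = ENNReal.ofReal (erf (τ / Real.sqrt (2 * v))) := by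
  set c := Real.sqrt (2 * v)
  have hc : 0 < c := Real.sqrt_pos.2 (by positivity)
  have hpdf (x : ℝ) :
      gaussianPDFReal 0 v x = (Real.sqrt (2 * Real.pi * v))⁻¹ * Real.exp (-(x / c) ^ 2) := by
    rw [gaussianPDFReal, div_pow, Real.sq_sqrt (by positivity), sub_zero, neg_div]
  have hnorm : Real.sqrt (2 * Real.pi * v) = Real.sqrt Real.pi * c := by
    rw [← Real.sqrt_mul Real.pi_pos.le]
    ring_nf
  rw [gaussianReal_apply_eq_integral 0 hv, integral_Icc_eq_integral_Ioc,
    ← intervalIntegral.integral_of_le (by linarith)]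
  simp_rw [hpdf]
  rw [intervalIntegral.integral_const_mul,
    intervalIntegral.integral_comp_div (fun t => Real.exp (-t ^ 2)) hc.ne', neg_div,
    integral_neg_self_exp_neg_sq, erf, hnorm, smul_eq_mul]
  field_simp

lemma gaussianReal_lt_abs {v : NNReal} (hv : v ≠ 0) {τ : ℝ} (hτ : 0 ≤ τ) :
    gaussianReal 0 v {x | τ < |x|} = ENNReal.ofReal (1 - erf (τ / Real.sqrt (2 * v))) := by
  have hcompl : {x : ℝ | τ < |x|} = (Icc (-τ) τ)ᶜ := by
    ext x
    simp only [mem_ofPred_eq, mem_compl_iff, mem_Icc, ← abs_le, not_le]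
  rw [hcompl, prob_compl_eq_one_sub measurableSet_Icc, gaussianReal_Icc_neg_self hv hτ,
    ENNReal.ofReal_sub _ (erf_nonneg (by positivity)), ENNReal.ofReal_one]

lemma gaussianReal_lt_abs_pos (μ : ℝ) {v : NNReal} (hv : v ≠ 0) (τ : ℝ) :
    0 < gaussianReal μ v {x | τ < |x|} := by
  refine pos_iff_ne_zero.2 fun h => ?_
  have hIoi : volume (Ioi τ) = 0 :=
    measure_mono_null (fun x (hx : τ < x) => hx.trans_le (le_abs_self x))
      (gaussianReal_absolutelyContinuous' μ hv h)
  simp at hIoi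

lemma mul_cond_apply_le {Ω : Type*} [MeasurableSpace Ω] (μ : Measure Ω) (s t : Set Ω) :
    μ s * μ[t|s] ≤ μ t := by
  rw [ProbabilityTheory.cond, Measure.smul_apply, smul_eq_mul, ← mul_assoc]
  calc μ s * (μ s)⁻¹ * μ.restrict s t ≤ 1 * μ.restrict s t := by
        gcongr
        exact ENNReal.mul_inv_le_one _
    _ ≤ μ t := by
        rw [one_mul]
        exact Measure.restrict_apply_le s t

theorem adaptive_trapezoid_error_lower_bound_general
    {Ω : Type*} [MeasurableSpace Ω] (μ : Measure Ω) [IsProbabilityMeasure μ]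
    (l a b τ : ℝ) (hl : 0 < l) (hab : a < b) (hτ : 0 < τ) (m : ℕ) (hm : 1 ≤ m)
    (ε : Ω → ℝ)
    (T₁ : Set Ω)
    (hPT₁ : μ T₁ =
      ENNReal.ofReal (erf (2 * Real.sqrt 2 * m * τ / Real.sqrt (l * (b - a) ^ 3))))
    (hcond : Measure.map ε (μ[|T₁]) =
      gaussianReal 0 (Real.toNNReal (l * (b - a) ^ 3 / (48 * m ^ 2)))) :
    ENNReal.ofReal
        ((1 - erf (2 * Real.sqrt 6 * m * τ / Real.sqrt (l * (b - a) ^ 3))) *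
          erf (2 * Real.sqrt 2 * m * τ / Real.sqrt (l * (b - a) ^ 3))) ≤
        μ {ω | τ < |ε ω|} ∧
      0 < μ {ω | τ < |ε ω|} := by
  have hL : 0 < l * (b - a) ^ 3 := by have := sub_pos.2 hab; positivity
  have hm₀ : (0 : ℝ) < m := by exact_mod_cast hm
  set L := l * (b - a) ^ 3
  set v := Real.toNNReal (L / (48 * m ^ 2))
  have hv : v ≠ 0 := (Real.toNNReal_pos.2 (by positivity)).ne'
  have hvar : τ / Real.sqrt (2 * v) = 2 * Real.sqrt 6 * m * τ / Real.sqrt L := by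
    have h2v : 2 * (v : ℝ) = L / (2 * Real.sqrt 6 * m) ^ 2 := by
      rw [Real.coe_toNNReal _ (by positivity), mul_pow, mul_pow, Real.sq_sqrt (by norm_num)]
      ring
    rw [h2v, Real.sqrt_div hL.le, Real.sqrt_sq (by positivity), div_div_eq_mul_div]
    ring
  have htail : μ[|T₁] {ω | τ < |ε ω|} = gaussianReal 0 v {x | τ < |x|} := by
    -- `Measure.map` of a non-AE-measurable map is `0`, which the Gaussian law is not.
    have hε : AEMeasurable ε (μ[|T₁]) :=
      .of_map_ne_zero (hcond ▸ IsProbabilityMeasure.ne_zero _)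
    rw [← hcond, Measure.map_apply_of_aemeasurable hε
      (measurableSet_lt measurable_const continuous_abs.measurable)]
    rfl
  have hgauss := gaussianReal_lt_abs hv hτ.le
  rw [hvar] at hgauss
  have hA : 0 < 1 - erf (2 * Real.sqrt 6 * m * τ / Real.sqrt L) :=
    ENNReal.ofReal_pos.1 (hgauss ▸ gaussianReal_lt_abs_pos 0 hv τ)
  have hB : 0 < erf (2 * Real.sqrt 2 * m * τ / Real.sqrt L) := erf_pos (by positivity)
  have hbound : ENNReal.ofReal ((1 - erf (2 * Real.sqrt 6 * m * τ / Real.sqrt L)) *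
      erf (2 * Real.sqrt 2 * m * τ / Real.sqrt L)) ≤ μ {ω | τ < |ε ω|} :=
    calc _ = μ T₁ * μ[|T₁] {ω | τ < |ε ω|} := by
          rw [hPT₁, htail, hgauss, ← ENNReal.ofReal_mul hB.le, mul_comm]
      _ ≤ μ {ω | τ < |ε ω|} := mul_cond_apply_le μ T₁ _
  exact ⟨hbound, (ENNReal.ofReal_pos.2 (mul_pos hA hB)).trans_le hbound⟩

/-- Let `ε | T₁ ~ N(0, σ₁²)` with `σ₁² = λ(b−a)³/(48m²)`, where the event `T₁` has
probability `P(|Z| < 4mτ/√(λ(b−a)³)) = erf(2√2 mτ/√(λ(b−a)³))` for `Z ~ N(0,1)`. Then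
`P(|ε| > τ) ≥ P(|ε| > τ | T₁) P(T₁)
  = [1 − erf(2√6 mτ/√(λ(b−a)³))] · erf(2√2 mτ/√(λ(b−a)³)) > 0`. -/
theorem adaptive_trapezoid_error_lower_bound
    {Ω : Type*} [MeasurableSpace Ω] (μ : Measure Ω) [IsProbabilityMeasure μ]
    (l a b τ : ℝ) (hl : 0 < l) (hab : a < b) (hτ : 0 < τ) (m : ℕ) (hm : 1 ≤ m)
    (ε : Ω → ℝ) (hε : Measurable ε)
    (T₁ : Set Ω) (hT₁ : MeasurableSet T₁)
    (hPT₁ : μ T₁ =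
      ENNReal.ofReal (erf (2 * Real.sqrt 2 * m * τ / Real.sqrt (l * (b - a) ^ 3))))
    (hcond : Measure.map ε (μ[|T₁]) =
      gaussianReal 0 (Real.toNNReal (l * (b - a) ^ 3 / (48 * m ^ 2)))) :
    ENNReal.ofReal
        ((1 - erf (2 * Real.sqrt 6 * m * τ / Real.sqrt (l * (b - a) ^ 3))) *
          erf (2 * Real.sqrt 2 * m * τ / Real.sqrt (l * (b - a) ^ 3))) ≤
        μ {ω | τ < |ε ω|} ∧
      0 < μ {ω | τ < |ε ω|} :=
  adaptive_trapezoid_error_lower_bound_general μ l a b τ hl hab hτ m hm ε T₁ hPT₁ hcond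
end
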